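/- Let m ∈ ℕ, (s,p) ∈ 𝕀_m, and let 𝕏 = {x¹,…,xⁿ} be a random multiset of n points sampled independently and uniformly from 𝕄_m^d. For every k ∈ ℕ with 1 ≤ k < n/2, ℙ( #(𝕏 ∩ 𝔹_m(s,p)) ≤ k ) ≤ (2 n^k / (k−1)!) · exp( −n / 2^{m+4} ). -/

import Mathlib

open MeasureTheory Finset
open scoped Classical

noncomputable section

/-- The `k`-dispersion of a finite point set `P ⊆ [0,1]^d`: the supremum of the volumes of
axis-parallel boxes inside `[0,1]^d` containing at most `k` points of `P`. -/
def kdisp (d k : ℕ) (P : Finset (Fin d → ℝ)) : ℝ :=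
  sSup { v : ℝ | ∃ a b : Fin d → ℝ,
    (∀ i, 0 ≤ a i ∧ a i ≤ b i ∧ b i ≤ 1) ∧
    (P.filter (fun x => ∀ i, x i ∈ Set.Ioo (a i) (b i))).card ≤ k ∧
    v = ∏ i, (b i - a i) }

/-- The minimal `k`-dispersion over all `n`-point subsets of `[0,1]^d`. -/
def kdispStar (d k n : ℕ) : ℝ :=
  sInf { v : ℝ | ∃ P : Finset (Fin d → ℝ),
    (∀ x ∈ P, ∀ i, x i ∈ Set.Icc (0:ℝ) 1) ∧ P.card = n ∧ v = kdisp d k P }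

/-- The one-dimensional mesh `𝕄_m = {1/2^m, 2/2^m, …, (2^m-1)/2^m}`. -/
def Mgrid (m : ℕ) : Finset ℝ := (Finset.Icc 1 (2 ^ m - 1)).image fun j : ℕ => (j : ℝ) / 2 ^ m

/-- The mesh `𝕄_m^d`. -/
def Ggrid (m d : ℕ) : Finset (Fin d → ℝ) := Fintype.piFinset fun _ => Mgrid m

/-- `I` is a subinterval of `[0,1]`. -/
def IsIntervalIn01 (I : Set ℝ) : Prop := I ⊆ Set.Icc 0 1 ∧ I.OrdConnected

/-- Membership of the axis-parallel box `∏_ℓ I ℓ` in the family `Ω_m(s,p)`: the box has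
volume exceeding `2^{-m}`, and for every coordinate `ℓ` one has
`s ℓ / 2^m < vol(I ℓ) ≤ (s ℓ + 1)/2^m` and `inf (I ℓ) ∈ [p ℓ - 2^{-m}, p ℓ)`. -/
def memOmega (m : ℕ) {d : ℕ} (s : Fin d → ℕ) (p : Fin d → ℝ) (I : Fin d → Set ℝ) : Prop :=
  (∀ ℓ, IsIntervalIn01 (I ℓ)) ∧
  ((2:ℝ) ^ m)⁻¹ < (volume (Set.pi Set.univ I)).toReal ∧
  ∀ ℓ, (s ℓ : ℝ) / 2 ^ m < (volume (I ℓ)).toReal ∧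
    (volume (I ℓ)).toReal ≤ ((s ℓ : ℝ) + 1) / 2 ^ m ∧
    sInf (I ℓ) ∈ Set.Ico (p ℓ - ((2:ℝ) ^ m)⁻¹) (p ℓ)

/-- `(s,p)` is an admissible index pair, i.e. `(s,p) ∈ 𝕀_m`: the parameters lie in the
allowed ranges and `Ω_m(s,p) ≠ ∅`. -/
def memIm (m : ℕ) {d : ℕ} (s : Fin d → ℕ) (p : Fin d → ℝ) : Prop :=
  (∀ ℓ, s ℓ < 2 ^ m) ∧
  (∀ ℓ, ∃ j : ℕ, 1 ≤ j ∧ j ≤ 2 ^ m - 1 ∧ p ℓ = (j : ℝ) / 2 ^ m) ∧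
  ∃ I, memOmega m s p I

/-- Membership of `z` in the box `𝔹_m(s,p) = ∏_ℓ [p ℓ, p ℓ + (s ℓ - 1)/2^m]`. -/
def memBox (m : ℕ) {d : ℕ} (s : Fin d → ℕ) (p : Fin d → ℝ) (z : Fin d → ℝ) : Prop :=
  ∀ ℓ, z ℓ ∈ Set.Icc (p ℓ) (p ℓ + ((s ℓ : ℝ) - 1) / 2 ^ m)

/-! The box `𝔹_m(s,p)` contains exactly `∏ s_ℓ` points of the mesh, so one uniform sample lands
in it with probability `q = ∏ s_ℓ / (2^m - 1)^d`. If at most `k` of the `n` samples land in it, some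
`n - k` of them miss it; a union bound over these index sets gives the probability bound
`C(n,k) (1 - q)^(n-k) ≤ n^k / k! · exp(-q (n - k))`, and `n - k > n/2`.

It remains to see `q ≥ 2^(-(m+3))`. Put `a = 2^m` and `t_ℓ = s_ℓ + 1 ∈ [2, a]`. A box of
`Ω_m(s,p)` has volume `> 1/a` and sides `≤ t_ℓ / a`, so `∏ t_ℓ > a^(d-1)`. Since
`x ↦ 3 log x + m log (a - x)` is concave, checking `x = 1` and `x = a/2` gives
`(a - 1)^m ≤ x^3 (a - x)^m` on `[1, a/2]`; at `x = a / t_ℓ` this reads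
`((a - 1) t_ℓ / (a (t_ℓ - 1)))^m ≤ (a / t_ℓ)^3`, and the product over `ℓ` is `< a^3 = 8^m`.
Hence `(a - 1)^d ∏ t_ℓ < 8 a^d ∏ s_ℓ`, i.e. `(a - 1)^d ≤ 8 a ∏ s_ℓ`. -/

section Analytic

open Real

lemma concaveOn_mul_log_add_mul_log_sub {a c e lo hi : ℝ} (hc : 0 ≤ c) (he : 0 ≤ e)
    (hlo : 0 < lo) (hhi : hi < a) :
    ConcaveOn ℝ (Set.Icc lo hi) (fun x => c * log x + e * log (a - x)) := by
  have hlog : ∀ {u v : ℝ}, 0 < u → ConcaveOn ℝ (Set.Icc u v) log := fun hu =>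
    strictConcaveOn_log_Ioi.concaveOn.subset (fun y hy => hu.trans_le hy.1) (convex_Icc _ _)
  have hsub : ConcaveOn ℝ (Set.Icc lo hi) (fun x => log (a - x)) := by
    refine ConcaveOn.comp (g := log) (f := fun x => a - x) ?_ ?_ ?_
    · rw [Set.image_const_sub_Icc]; exact hlog (by linarith)
    · exact (concaveOn_const a (convex_Icc _ _)).sub (convexOn_id (convex_Icc _ _))
    · rw [Set.image_const_sub_Icc]
      exact strictMonoOn_log.monotoneOn.mono fun y hy => lt_of_lt_of_le (by linarith) hy.1
  exact ((hlog hlo).smul hc).add (hsub.smul he)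

lemma two_pow_sub_one_pow_le {m : ℕ} {x : ℝ} (hx1 : 1 ≤ x) (hx2 : x ≤ 2 ^ m / 2) :
    ((2 : ℝ) ^ m - 1) ^ m ≤ x ^ 3 * (2 ^ m - x) ^ m := by
  rcases lt_or_ge m 2 with hm | hm
  · interval_cases m
    · norm_num at hx2; linarith
    · obtain rfl : x = 1 := by norm_num at hx2; linarith
      norm_num
  set a : ℝ := 2 ^ m
  have ha : 4 ≤ a := by
    calc (4 : ℝ) = 2 ^ 2 := by norm_num
      _ ≤ a := pow_le_pow_right₀ (by norm_num) hm
  have hlog : ∀ y ∈ Set.Icc 1 (a / 2),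
      log (y ^ 3 * (a - y) ^ m) = 3 * log y + m * log (a - y) := by
    intro y hy
    rw [log_mul (pow_ne_zero _ (by linarith [hy.1])) (pow_ne_zero _ (by linarith [hy.2])),
      log_pow, log_pow]
    push_cast; ring
  have hconc : ConcaveOn ℝ (Set.Icc 1 (a / 2)) (fun y => log (y ^ 3 * (a - y) ^ m)) :=
    (concaveOn_mul_log_add_mul_log_sub (by norm_num) m.cast_nonneg one_pos (by linarith)).congr
      fun y hy => (hlog y hy).symm
  have hend : (a - 1) ^ m ≤ (a / 2) ^ 3 * (a - a / 2) ^ m :=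
    calc (a - 1) ^ m ≤ a ^ m := pow_le_pow_left₀ (by linarith) (by linarith) m
      _ = a * (a / 2) ^ m := by
        rw [div_pow, show (2 : ℝ) ^ m = a from rfl]; field_simp
      _ ≤ (a / 2) ^ 3 * (a - a / 2) ^ m := by
        rw [sub_half]
        gcongr
        nlinarith [mul_nonneg (by linarith : 0 ≤ a) (by nlinarith : 0 ≤ a ^ 2 - 8)]
  have hmin := hconc.ge_on_segment (Set.left_mem_Icc.2 (by linarith))
    (Set.right_mem_Icc.2 (by linarith)) (by rw [segment_eq_Icc (by linarith)]; exact ⟨hx1, hx2⟩)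
  have h1 : (0 : ℝ) < (a - 1) ^ m := pow_pos (by linarith) m
  rw [← log_le_log_iff h1 (mul_pos (pow_pos (by linarith) 3) (pow_pos (by linarith) m))]
  refine le_trans ?_ hmin
  simp only [one_pow, one_mul, le_min_iff, le_refl, true_and]
  exact log_le_log h1 hend

lemma two_pow_sub_one_pow_card_le {ι : Type*} [Fintype ι] {m : ℕ} (t : ι → ℝ)
    (ht : ∀ i, 2 ≤ t i ∧ t i ≤ 2 ^ m)
    (hprod : ((2 : ℝ) ^ m) ^ Fintype.card ι < 2 ^ m * ∏ i, t i) :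
    ((2 : ℝ) ^ m - 1) ^ Fintype.card ι ≤ 2 ^ (m + 3) * ∏ i, (t i - 1) := by
  set a : ℝ := 2 ^ m
  set N := Fintype.card ι
  have ha : 1 ≤ a := one_le_pow₀ (by norm_num)
  have ht0 : ∀ i, 0 < t i := fun i => by linarith [ht i]
  have hT : 0 < ∏ i, t i := prod_pos fun i _ => ht0 i
  have hT1 : 0 < ∏ i, (t i - 1) := prod_pos fun i _ => by linarith [ht i]
  have hcoord : ∀ i, ((a - 1) * t i) ^ m ≤ (a / t i) ^ 3 * (a * (t i - 1)) ^ m := by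
    intro i
    have hx := two_pow_sub_one_pow_le (m := m) (x := a / t i)
      (by rw [le_div_iff₀ (ht0 i)]; linarith [ht i])
      (by rw [div_le_div_iff₀ (ht0 i) two_pos]; nlinarith [ht i])
    calc ((a - 1) * t i) ^ m = (a - 1) ^ m * t i ^ m := mul_pow _ _ _
      _ ≤ (a / t i) ^ 3 * (a - a / t i) ^ m * t i ^ m :=
        mul_le_mul_of_nonneg_right hx (pow_nonneg (ht0 i).le m)
      _ = (a / t i) ^ 3 * (a * (t i - 1)) ^ m := by
        rw [mul_assoc, ← mul_pow, sub_mul, div_mul_cancel₀ _ (ht0 i).ne', mul_sub, mul_one]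
  have hratio : a ^ N / ∏ i, t i < a := by rwa [div_lt_iff₀ hT]
  have hpow : ((a - 1) ^ N * ∏ i, t i) ^ m < (2 ^ 3 * a ^ N * ∏ i, (t i - 1)) ^ m := by
    calc ((a - 1) ^ N * ∏ i, t i) ^ m = ∏ i, ((a - 1) * t i) ^ m := by
          rw [Finset.prod_pow, prod_mul_distrib, prod_const, card_univ]
      _ ≤ ∏ i, ((a / t i) ^ 3 * (a * (t i - 1)) ^ m) :=
          prod_le_prod (fun i _ => by positivity [ht0 i]) fun i _ => hcoord i
      _ = (a ^ N / ∏ i, t i) ^ 3 * (a ^ N * ∏ i, (t i - 1)) ^ m := by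
          rw [prod_mul_distrib, Finset.prod_pow, Finset.prod_pow, prod_div_distrib,
            prod_mul_distrib, prod_const, card_univ]
      _ < a ^ 3 * (a ^ N * ∏ i, (t i - 1)) ^ m := by gcongr
      _ = (2 ^ 3 * a ^ N * ∏ i, (t i - 1)) ^ m := by
          rw [mul_assoc, mul_pow (2 ^ 3 : ℝ), ← pow_mul, ← pow_mul (2 : ℝ) 3 m, mul_comm 3 m]
  have hbase : (a - 1) ^ N * ∏ i, t i < 2 ^ 3 * a ^ N * ∏ i, (t i - 1) :=
    lt_of_pow_lt_pow_left₀ m (by positivity) hpow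
  refine le_of_mul_le_mul_right ?_ (pow_pos (by positivity : (0 : ℝ) < a) N)
  calc (a - 1) ^ N * a ^ N ≤ (a - 1) ^ N * (a * ∏ i, t i) :=
        mul_le_mul_of_nonneg_left hprod.le (pow_nonneg (by linarith) N)
    _ = a * ((a - 1) ^ N * ∏ i, t i) := by ring
    _ ≤ a * (2 ^ 3 * a ^ N * ∏ i, (t i - 1)) := by gcongr
    _ = 2 ^ (m + 3) * (∏ i, (t i - 1)) * a ^ N := by rw [pow_add]; ring

end Analytic

lemma card_filter_forall_mem_not {α : Type*} {n : ℕ} (G : Finset α) (R : α → Prop)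
    (T : Finset (Fin n)) :
    ((Fintype.piFinset fun _ : Fin n => G).filter fun ω => ∀ i ∈ T, ¬ R (ω i)).card
      = (G.filter fun g => ¬ R g).card ^ T.card * G.card ^ (n - T.card) := by
  have hpi : ((Fintype.piFinset fun _ : Fin n => G).filter fun ω => ∀ i ∈ T, ¬ R (ω i))
      = Fintype.piFinset fun i => if i ∈ T then G.filter fun g => ¬ R g else G := by
    ext ω
    simp only [mem_filter, Fintype.mem_piFinset]
    refine ⟨fun ⟨hG, hR⟩ i => ?_, fun h => ⟨fun i => ?_, fun i hi => ?_⟩⟩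
    · split_ifs with hi
      exacts [mem_filter.2 ⟨hG i, hR i hi⟩, hG i]
    · have := h i
      split_ifs at this
      exacts [(mem_filter.1 this).1, this]
    · have := h i
      rw [if_pos hi, mem_filter] at this
      exact this.2
  rw [hpi, Fintype.card_piFinset]
  simp only [apply_ite card, prod_ite, prod_const, filter_mem_eq_inter, univ_inter]
  rw [← compl_filter, card_compl, filter_mem_eq_inter, univ_inter, Fintype.card_fin]

lemma card_filter_card_filter_le_le {α : Type*} (G : Finset α) (R : α → Prop) {n k : ℕ}
    (hkn : k ≤ n) :
    ((Fintype.piFinset fun _ : Fin n => G).filter fun ω =>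
        (univ.filter fun i => R (ω i)).card ≤ k).card
      ≤ n.choose k * ((G.filter fun g => ¬ R g).card ^ (n - k) * G.card ^ k) := by
  set Ω := Fintype.piFinset fun _ : Fin n => G
  have hcover : (Ω.filter fun ω => (univ.filter fun i => R (ω i)).card ≤ k) ⊆
      (univ.powersetCard (n - k)).biUnion fun T => Ω.filter fun ω => ∀ i ∈ T, ¬ R (ω i) := by
    intro ω hω
    rw [mem_filter] at hω
    have hout : n - k ≤ (univ.filter fun i => ¬ R (ω i)).card := by
      have := card_filter_add_card_filter_not (s := (univ : Finset (Fin n)))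
        (p := fun i => R (ω i))
      simp only [card_univ, Fintype.card_fin] at this
      omega
    obtain ⟨T, hT, hTcard⟩ := exists_subset_card_eq hout
    exact mem_biUnion.2 ⟨T, mem_powersetCard_univ.2 hTcard,
      mem_filter.2 ⟨hω.1, fun i hi => (mem_filter.1 (hT hi)).2⟩⟩
  calc _ ≤ _ := card_le_card hcover
    _ ≤ _ := card_biUnion_le
    _ = _ := by
      rw [sum_congr rfl fun T hT => by
        rw [card_filter_forall_mem_not, (mem_powersetCard_univ.1 hT), Nat.sub_sub_self hkn]]
      rw [sum_const, card_powersetCard, card_univ, Fintype.card_fin, smul_eq_mul,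
        Nat.choose_symm hkn]

lemma card_filter_card_filter_le_div_le {α : Type*} (G : Finset α) (hG : G.Nonempty)
    (R : α → Prop) {n k : ℕ} (hkn : k ≤ n) :
    (((Fintype.piFinset fun _ : Fin n => G).filter fun ω =>
        (univ.filter fun i => R (ω i)).card ≤ k).card : ℝ) /
      ((Fintype.piFinset fun _ : Fin n => G).card : ℝ)
    ≤ (n : ℝ) ^ k / k.factorial *
      Real.exp (-((n - k : ℕ) : ℝ) * ((G.filter R).card / G.card)) := by
  set q : ℝ := (G.filter R).card / G.card
  have hN : (0 : ℝ) < G.card := by exact_mod_cast hG.card_pos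
  have hq1 : q ≤ 1 := div_le_one_of_le₀ (by exact_mod_cast card_filter_le G R) hN.le
  have hcompl : ((G.filter fun g => ¬ R g).card : ℝ) = G.card * (1 - q) := by
    rw [mul_one_sub, mul_div_cancel₀ _ hN.ne', eq_sub_iff_add_eq']
    exact_mod_cast card_filter_add_card_filter_not (s := G) (p := R)
  have htotal : ((Fintype.piFinset fun _ : Fin n => G).card : ℝ) =
      (G.card : ℝ) ^ (n - k) * (G.card : ℝ) ^ k := by
    rw [Fintype.card_piFinset, prod_const, card_univ, Fintype.card_fin, ← pow_add,
      Nat.sub_add_cancel hkn, Nat.cast_pow]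
  calc _ ≤ (n.choose k * (((G.filter fun g => ¬ R g).card : ℝ) ^ (n - k) * (G.card : ℝ) ^ k)) /
          ((Fintype.piFinset fun _ : Fin n => G).card : ℝ) := by
        gcongr
        exact_mod_cast card_filter_card_filter_le_le G R hkn
    _ = n.choose k * (1 - q) ^ (n - k) := by
        rw [htotal, hcompl, mul_pow]
        field_simp
    _ ≤ (n : ℝ) ^ k / k.factorial * Real.exp (-q) ^ (n - k) := by
        gcongr
        · exact Nat.choose_le_pow_div k n
        · exact Real.one_sub_le_exp_neg q
    _ = _ := by rw [← Real.exp_nat_mul]; ring_nf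

lemma injective_natCast_div_two_pow (m : ℕ) :
    Function.Injective fun j : ℕ => (j : ℝ) / 2 ^ m :=
  fun _ _ h => Nat.cast_injective ((div_left_inj' (by positivity)).1 h)

lemma Mgrid_card (m : ℕ) : (Mgrid m).card = 2 ^ m - 1 := by
  rw [Mgrid, card_image_of_injective _ (injective_natCast_div_two_pow m), Nat.card_Icc,
    Nat.add_sub_cancel]

lemma Ggrid_card (m d : ℕ) : (Ggrid m d).card = (2 ^ m - 1) ^ d := by
  rw [Ggrid, Fintype.card_piFinset, prod_const, card_univ, Fintype.card_fin, Mgrid_card]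

lemma card_filter_Mgrid_mem_Icc {m j s : ℕ} (hj : 1 ≤ j) (hs : 1 ≤ s) (hjs : j + s ≤ 2 ^ m) :
    ((Mgrid m).filter fun y =>
      y ∈ Set.Icc ((j : ℝ) / 2 ^ m) (j / 2 ^ m + ((s : ℝ) - 1) / 2 ^ m)).card = s := by
  have h2m : (0 : ℝ) < 2 ^ m := by positivity
  rw [Mgrid, filter_image, card_image_of_injective _ (injective_natCast_div_two_pow m)]
  convert Nat.card_Icc j (j + s - 1) using 2
  · ext i
    simp only [mem_filter, mem_Icc, Set.mem_Icc, ← add_div, div_le_div_iff_of_pos_right h2m]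
    have hcast : ((j + s - 1 : ℕ) : ℝ) = j + ((s : ℝ) - 1) := by
      rw [Nat.cast_sub (by omega)]; push_cast; ring
    rw [← hcast, Nat.cast_le, Nat.cast_le]
    omega
  · omega

lemma card_filter_Ggrid_memBox {m d : ℕ} {s : Fin d → ℕ} {p : Fin d → ℝ} (j : Fin d → ℕ)
    (hp : ∀ ℓ, p ℓ = (j ℓ : ℝ) / 2 ^ m) (hj : ∀ ℓ, 1 ≤ j ℓ) (hs : ∀ ℓ, 1 ≤ s ℓ)
    (hjs : ∀ ℓ, j ℓ + s ℓ ≤ 2 ^ m) :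
    ((Ggrid m d).filter (memBox m s p)).card = ∏ ℓ, s ℓ := by
  have hpi : (Ggrid m d).filter (memBox m s p) = Fintype.piFinset fun ℓ =>
      (Mgrid m).filter fun y => y ∈ Set.Icc (p ℓ) (p ℓ + ((s ℓ : ℝ) - 1) / 2 ^ m) := by
    ext x
    simp only [Ggrid, memBox, mem_filter, Fintype.mem_piFinset, forall_and]
  rw [hpi, Fintype.card_piFinset]
  refine prod_congr rfl fun ℓ _ => ?_
  rw [hp ℓ]
  exact card_filter_Mgrid_mem_Icc (hj ℓ) (hs ℓ) (hjs ℓ)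

lemma toReal_volume_le_one_sub_sInf {I : Set ℝ} (hI : I ⊆ Set.Icc 0 1) :
    (volume I).toReal ≤ 1 - sInf I := by
  rcases I.eq_empty_or_nonempty with rfl | ⟨x, hx⟩
  · simp
  have hbdd : BddBelow I := bddBelow_Icc.mono hI
  have hsub : I ⊆ Set.Icc (sInf I) 1 := fun y hy => ⟨csInf_le hbdd hy, (hI hy).2⟩
  have hle : sInf I ≤ 1 := (csInf_le hbdd hx).trans (hI hx).2
  calc (volume I).toReal ≤ (volume (Set.Icc (sInf I) 1)).toReal :=
        ENNReal.toReal_mono (by simp [Real.volume_Icc]) (measure_mono hsub)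
    _ = 1 - sInf I := by rw [Real.volume_Icc, ENNReal.toReal_ofReal (by linarith)]

namespace memOmega

variable {m d : ℕ} {s : Fin d → ℕ} {p : Fin d → ℝ} {I : Fin d → Set ℝ}

lemma toReal_volume_le_one (h : memOmega m s p I) (ℓ : Fin d) : (volume (I ℓ)).toReal ≤ 1 := by
  have hI := (h.1 ℓ).1
  linarith [toReal_volume_le_one_sub_sInf hI, Real.sInf_nonneg fun x hx => (hI hx).1]

lemma inv_two_pow_lt_prod (h : memOmega m s p I) :
    ((2 : ℝ) ^ m)⁻¹ < ∏ ℓ, (volume (I ℓ)).toReal := by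
  simpa only [volume_pi_pi, ENNReal.toReal_prod] using h.2.1

lemma one_le (h : memOmega m s p I) (ℓ : Fin d) : 1 ≤ s ℓ := by
  have hprod : ∏ ℓ', (volume (I ℓ')).toReal ≤ (volume (I ℓ)).toReal := by
    rw [← mul_prod_erase _ _ (mem_univ ℓ)]
    exact mul_le_of_le_one_right ENNReal.toReal_nonneg
      (prod_le_one (fun _ _ => ENNReal.toReal_nonneg) fun i _ => h.toReal_volume_le_one i)
  have hlt : ((2 : ℝ) ^ m)⁻¹ < ((s ℓ : ℝ) + 1) / 2 ^ m :=
    h.inv_two_pow_lt_prod.trans_le (hprod.trans (h.2.2 ℓ).2.1)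
  rw [inv_eq_one_div, div_lt_div_iff_of_pos_right (by positivity)] at hlt
  exact_mod_cast (by linarith : (0 : ℝ) < s ℓ)

lemma add_le (h : memOmega m s p I) {ℓ : Fin d} {j : ℕ} (hp : p ℓ = (j : ℝ) / 2 ^ m) :
    j + s ℓ ≤ 2 ^ m := by
  have h2m : (0 : ℝ) < 2 ^ m := by positivity
  obtain ⟨hs, -, hinf, -⟩ := h.2.2 ℓ
  have hrhs : ((2 : ℝ) ^ m - j + 1) / 2 ^ m = 1 - ((j : ℝ) / 2 ^ m - ((2 : ℝ) ^ m)⁻¹) := by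
    field_simp
    ring
  have hlt : (s ℓ : ℝ) / 2 ^ m < ((2 : ℝ) ^ m - j + 1) / 2 ^ m := by
    linarith [toReal_volume_le_one_sub_sInf (h.1 ℓ).1, hp ▸ hinf]
  rw [div_lt_div_iff_of_pos_right h2m] at hlt
  have : ((j + s ℓ : ℕ) : ℝ) < ((2 ^ m + 1 : ℕ) : ℝ) := by push_cast; linarith
  exact Nat.lt_succ_iff.1 (by exact_mod_cast this)

lemma two_pow_pow_lt (h : memOmega m s p I) :
    ((2 : ℝ) ^ m) ^ d < 2 ^ m * ∏ ℓ, ((s ℓ : ℝ) + 1) := by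
  have h2m : (0 : ℝ) < 2 ^ m := by positivity
  have hlt : ((2 : ℝ) ^ m)⁻¹ < (∏ ℓ, ((s ℓ : ℝ) + 1)) / (2 ^ m) ^ d := by
    calc ((2 : ℝ) ^ m)⁻¹ < ∏ ℓ, (volume (I ℓ)).toReal := h.inv_two_pow_lt_prod
      _ ≤ ∏ ℓ, (((s ℓ : ℝ) + 1) / 2 ^ m) :=
          prod_le_prod (fun _ _ => ENNReal.toReal_nonneg) fun ℓ _ => (h.2.2 ℓ).2.1
      _ = _ := by rw [prod_div_distrib, prod_const, card_univ, Fintype.card_fin]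
  rwa [inv_eq_one_div, div_lt_div_iff₀ h2m (by positivity), one_mul, mul_comm] at hlt

lemma one_div_two_pow_le_card_filter_memBox_div (hm : 1 ≤ m) (h : memOmega m s p I)
    (j : Fin d → ℕ) (hp : ∀ ℓ, p ℓ = (j ℓ : ℝ) / 2 ^ m) (hj : ∀ ℓ, 1 ≤ j ℓ) :
    1 / 2 ^ (m + 3) ≤ (((Ggrid m d).filter (memBox m s p)).card : ℝ) / (Ggrid m d).card := by
  have hjs : ∀ ℓ, j ℓ + s ℓ ≤ 2 ^ m := fun ℓ => h.add_le (hp ℓ)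
  have hbound := two_pow_sub_one_pow_card_le (fun ℓ => (s ℓ : ℝ) + 1)
    (fun ℓ => ⟨by linarith [(Nat.one_le_cast (α := ℝ)).2 (h.one_le ℓ)],
      by exact_mod_cast (by linarith [hj ℓ, hjs ℓ] : s ℓ + 1 ≤ 2 ^ m)⟩)
    (by simpa only [Fintype.card_fin] using h.two_pow_pow_lt)
  simp only [Fintype.card_fin, add_sub_cancel_right] at hbound
  have h2m : (1 : ℝ) ≤ 2 ^ m - 1 := by
    linarith [pow_le_pow_right₀ (by norm_num : (1 : ℝ) ≤ 2) hm]
  rw [card_filter_Ggrid_memBox j hp hj h.one_le hjs, Ggrid_card, Nat.cast_pow,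
    Nat.cast_sub Nat.one_le_two_pow]
  push_cast
  rw [div_le_div_iff₀ (by positivity) (pow_pos (by linarith) d)]
  linarith

end memOmega

theorem statement_6_general (m d n k : ℕ) (hm : 1 ≤ m) (hkn : 2 * k < n)
    (s : Fin d → ℕ) (p : Fin d → ℝ) (hsp : memIm m s p) :
    (((Fintype.piFinset fun _ : Fin n => Ggrid m d).filter fun ω =>
        (Finset.univ.filter fun i : Fin n => memBox m s p (ω i)).card ≤ k).card : ℝ) /
      ((Fintype.piFinset fun _ : Fin n => Ggrid m d).card : ℝ)
    ≤ 2 * (n : ℝ) ^ k / (Nat.factorial (k - 1)) * Real.exp (-(n : ℝ) / 2 ^ (m + 4)) := by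
  obtain ⟨-, hp, I, hI⟩ := hsp
  choose j hj _ hp using hp
  set q : ℝ := (((Ggrid m d).filter (memBox m s p)).card : ℝ) / (Ggrid m d).card
  have hq : 1 / 2 ^ (m + 3) ≤ q := hI.one_div_two_pow_le_card_filter_memBox_div hm j hp hj
  have hG : (Ggrid m d).Nonempty := by
    rw [← card_pos, Ggrid_card]
    exact pow_pos (by have := Nat.one_lt_two_pow (n := m) (by omega); omega) d
  have hfact : (n : ℝ) ^ k / k.factorial ≤ 2 * (n : ℝ) ^ k / (k - 1).factorial := by
    rw [mul_div_assoc]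
    exact (div_le_div_of_nonneg_left (by positivity) (by positivity)
      (by exact_mod_cast Nat.factorial_le (Nat.sub_le k 1))).trans
      (le_mul_of_one_le_left (by positivity) one_le_two)
  have hexponent : -((n - k : ℕ) : ℝ) * q ≤ -(n : ℝ) / 2 ^ (m + 4) := by
    have hnk : (n : ℝ) / 2 ≤ ((n - k : ℕ) : ℝ) := by
      rw [Nat.cast_sub (by omega)]
      have : (2 : ℝ) * k < n := by exact_mod_cast hkn
      linarith
    have := mul_le_mul hnk hq (by positivity) (Nat.cast_nonneg _)
    rw [neg_mul, neg_div, neg_le_neg_iff, pow_succ]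
    linarith [show (n : ℝ) / 2 * (1 / 2 ^ (m + 3)) = n / (2 ^ (m + 3) * 2) by ring]
  calc _ ≤ (n : ℝ) ^ k / k.factorial * Real.exp (-((n - k : ℕ) : ℝ) * q) :=
        card_filter_card_filter_le_div_le _ hG _ (by omega)
    _ ≤ _ := by gcongr

/-- For `(s,p) ∈ 𝕀_m` and a random multiset `𝕏 = {x¹,…,xⁿ}` of `n` points sampled
independently and uniformly from `𝕄_m^d`, for every `k ∈ ℕ` with `1 ≤ k < n/2`,
`ℙ(#(𝕏 ∩ 𝔹_m(s,p)) ≤ k) ≤ (2 n^k/(k-1)!) · exp(-n/2^{m+4})`. -/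
theorem statement_6 (m d n k : ℕ) (hm : 1 ≤ m) (hd : 1 ≤ d) (hk : 1 ≤ k) (hkn : 2 * k < n)
    (s : Fin d → ℕ) (p : Fin d → ℝ) (hsp : memIm m s p) :
    (((Fintype.piFinset fun _ : Fin n => Ggrid m d).filter fun ω =>
        (Finset.univ.filter fun i : Fin n => memBox m s p (ω i)).card ≤ k).card : ℝ) /
      ((Fintype.piFinset fun _ : Fin n => Ggrid m d).card : ℝ)
    ≤ 2 * (n : ℝ) ^ k / (Nat.factorial (k - 1)) * Real.exp (-(n : ℝ) / 2 ^ (m + 4)) :=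
  statement_6_general m d n k hm hkn s p hsp
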